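/- arXiv:1309.3386 — 2 statements merged into one kernel-verified Lean document; each statement's English description precedes it below -/
import Mathlib

section
/- Let A be a region of S^{d-1} written as a disjoint union of measurable subregions A_1, …, A_N, each with diameter strictly less than d_min(V) for a finite subset V of S^{d-1}. For T Haar-uniform on O(d), the estimator g_A(T) = (1/|V|) Σ_{v∈V} 1_A(Tv) satisfies Var(g_A(T)) ≤ π(A) − π(A)² + (N/|V| − 1)·π(A). -/
/-! Each rotated copy `TV` meets every piece `𝒜 i` in at most one point, since the pieces are
narrower than the minimal distance of `V`; hence the estimator `g` takes values in
`[0, N / |V|]`. Its mean is `π(A)`, as every `T v` has law `π`, so the Bhatia–Davis inequality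
bounds its variance by `(N / |V| - π(A)) π(A)`. -/

open MeasureTheory ProbabilityTheory Finset

section MinDist

variable {α β ι : Type*} [PseudoMetricSpace α] [PseudoMetricSpace β]

noncomputable def minDist (V : Finset α) : ℝ :=
  sInf {r : ℝ | ∃ v ∈ V, ∃ w ∈ V, v ≠ w ∧ r = dist v w}

lemma minDist_le_dist {V : Finset α} {v w : α} (hv : v ∈ V) (hw : w ∈ V) (hvw : v ≠ w) :
    minDist V ≤ dist v w :=
  csInf_le ⟨0, by rintro r ⟨_, _, _, _, _, rfl⟩; exact dist_nonneg⟩ ⟨v, hv, w, hw, hvw, rfl⟩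

lemma Isometry.eq_of_mem_of_diam_lt_minDist {f : α → β} (hf : Isometry f) {V : Finset α}
    {s : Set β} (hs : Bornology.IsBounded s) (hdiam : Metric.diam s < minDist V) {v w : α}
    (hv : v ∈ V) (hw : w ∈ V) (hfv : f v ∈ s) (hfw : f w ∈ s) : v = w := by
  by_contra hvw
  have hmin := minDist_le_dist hv hw hvw
  rw [← hf.dist_eq] at hmin
  linarith [Metric.dist_le_diam_of_mem hs hfv hfw]

open scoped Classical in
lemma Isometry.card_filter_mem_iUnion_le [Fintype ι] {f : α → β} (hf : Isometry f)
    (V : Finset α) {𝒜 : ι → Set β} (hb : ∀ i, Bornology.IsBounded (𝒜 i))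
    (hdiam : ∀ i, Metric.diam (𝒜 i) < minDist V) :
    #{v ∈ V | f v ∈ ⋃ i, 𝒜 i} ≤ Fintype.card ι :=
  calc #{v ∈ V | f v ∈ ⋃ i, 𝒜 i} = #(univ.biUnion fun i ↦ {v ∈ V | f v ∈ 𝒜 i}) := by
        congr 1; ext v; simp
    _ ≤ ∑ i, #{v ∈ V | f v ∈ 𝒜 i} := card_biUnion_le
    _ ≤ ∑ _ : ι, 1 := sum_le_sum fun i _ ↦ card_le_one.2 fun v hv w hw ↦
        hf.eq_of_mem_of_diam_lt_minDist (hb i) (hdiam i) (mem_filter.1 hv).1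
          (mem_filter.1 hw).1 (mem_filter.1 hv).2 (mem_filter.1 hw).2
    _ = Fintype.card ι := by simp

lemma Isometry.sum_indicator_iUnion_le [Fintype ι] {f : α → β} (hf : Isometry f)
    (V : Finset α) {𝒜 : ι → Set β} (hb : ∀ i, Bornology.IsBounded (𝒜 i))
    (hdiam : ∀ i, Metric.diam (𝒜 i) < minDist V) :
    ∑ v ∈ V, (⋃ i, 𝒜 i).indicator (fun _ ↦ (1 : ℝ)) (f v) ≤ Fintype.card ι := by
  classical
  simp only [Set.indicator_apply, sum_boole]
  exact_mod_cast hf.card_filter_mem_iUnion_le V hb hdiam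

end MinDist

section Estimator

variable {Ω E ι : Type*} [MeasurableSpace Ω] [MeasurableSpace E] {P : Measure Ω}
  {μ : Measure E} {A : Set E}

lemma integral_indicator_one_comp_of_map_eq {X : Ω → E} (hX : Measurable X)
    (hlaw : P.map X = μ) (hA : MeasurableSet A) :
    ∫ ω, A.indicator (fun _ ↦ (1 : ℝ)) (X ω) ∂P = μ.real A := by
  rw [← hlaw, map_measureReal_apply hX hA, ← integral_indicator_one (hX hA)]
  rfl

lemma integral_average_indicator_eq [IsFiniteMeasure P] (V : Finset ι) (hV : V.Nonempty)
    {X : ι → Ω → E} (hX : ∀ v ∈ V, Measurable (X v)) (hlaw : ∀ v ∈ V, P.map (X v) = μ)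
    (hA : MeasurableSet A) :
    ∫ ω, (#V : ℝ)⁻¹ * ∑ v ∈ V, A.indicator (fun _ ↦ (1 : ℝ)) (X v ω) ∂P = μ.real A := by
  have hint : ∀ v ∈ V, Integrable (fun ω ↦ A.indicator (fun _ ↦ (1 : ℝ)) (X v ω)) P :=
    fun v hv ↦ (integrable_const (1 : ℝ)).indicator (hX v hv hA)
  rw [integral_const_mul, integral_finsetSum V hint,
    sum_congr rfl fun v hv ↦ integral_indicator_one_comp_of_map_eq (hX v hv) (hlaw v hv) hA,
    sum_const, nsmul_eq_mul, inv_mul_cancel_left₀ (by exact_mod_cast hV.card_pos.ne')]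

end Estimator

theorem variance_spherical_estimator_le_general {d : ℕ} {Ω : Type*}
    [MeasurableSpace Ω] (P : Measure Ω) [IsProbabilityMeasure P]
    (A : Set (EuclideanSpace ℝ (Fin d))) (hAm : MeasurableSet A)
    (hAs : A ⊆ Metric.sphere (0 : EuclideanSpace ℝ (Fin d)) 1)
    (V : Finset (EuclideanSpace ℝ (Fin d))) (hV : ∀ v ∈ V, ‖v‖ = 1)
    (hVne : V.Nonempty)
    (N : ℕ) (𝒜 : Fin N → Set (EuclideanSpace ℝ (Fin d)))
    (h𝒜union : (⋃ i, 𝒜 i) = A)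
    (h𝒜diam : ∀ i, Metric.diam (𝒜 i) <
      sInf {r : ℝ | ∃ v ∈ V, ∃ w ∈ V, v ≠ w ∧ r = dist v w})
    (π : Measure (EuclideanSpace ℝ (Fin d)))
    (T : Ω → (EuclideanSpace ℝ (Fin d) ≃ₗᵢ[ℝ] EuclideanSpace ℝ (Fin d)))
    (hTmeas : ∀ v : EuclideanSpace ℝ (Fin d), Measurable fun ω => T ω v)
    (hTlaw : ∀ v : EuclideanSpace ℝ (Fin d), ‖v‖ = 1 →
      Measure.map (fun ω => T ω v) P = π) :
    variance (fun ω => (V.card : ℝ)⁻¹ *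
        ∑ v ∈ V, A.indicator (fun _ => (1 : ℝ)) (T ω v)) P
      ≤ (π A).toReal - (π A).toReal ^ 2
        + ((N : ℝ) / (V.card : ℝ) - 1) * (π A).toReal := by
  set g : Ω → ℝ := fun ω => (#V : ℝ)⁻¹ * ∑ v ∈ V, A.indicator (fun _ => (1 : ℝ)) (T ω v)
  have hg_meas : Measurable g :=
    (measurable_sum V fun v _ ↦ (measurable_const.indicator hAm).comp (hTmeas v)).const_mul _
  have h𝒜bdd (i : Fin N) : Bornology.IsBounded (𝒜 i) :=
    Metric.isBounded_sphere.subset ((h𝒜union ▸ Set.subset_iUnion 𝒜 i).trans hAs)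
  have hg_mem (ω : Ω) : g ω ∈ Set.Icc 0 ((N : ℝ) / #V) := by
    refine ⟨mul_nonneg (by positivity) (sum_nonneg fun v _ ↦ Set.indicator_nonneg
      (fun _ _ ↦ zero_le_one) _), ?_⟩
    have hcount := (T ω).isometry.sum_indicator_iUnion_le V h𝒜bdd h𝒜diam
    rw [h𝒜union, Fintype.card_fin] at hcount
    rw [div_eq_inv_mul]
    exact mul_le_mul_of_nonneg_left hcount (by positivity)
  have hg_mean : P[g] = (π A).toReal :=
    integral_average_indicator_eq V hVne (fun v _ ↦ hTmeas v) (fun v hv ↦ hTlaw v (hV v hv)) hAm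
  calc variance g P ≤ ((N : ℝ) / #V - P[g]) * (P[g] - 0) :=
        variance_le_sub_mul_sub (ae_of_all _ hg_mem) hg_meas.aemeasurable
    _ = _ := by rw [hg_mean]; ring

/-- If `A ⊆ S^{d-1}` is a disjoint union of `N` measurable pieces,
each of diameter strictly less than the minimal pairwise distance of the
finite set `V` of unit vectors, then the spherical estimator
`g_A(T) = |V|⁻¹ ∑_{v∈V} 1_A(Tv)` (with `T` a random rotation whose action on
each unit vector has the uniform law `π` on the sphere) has variance at most
`π(A) − π(A)² + (N/|V| − 1)π(A)`. -/
theorem variance_spherical_estimator_le {d : ℕ} {Ω : Type*}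
    [MeasurableSpace Ω] (P : Measure Ω) [IsProbabilityMeasure P]
    (A : Set (EuclideanSpace ℝ (Fin d))) (hAm : MeasurableSet A)
    (hAs : A ⊆ Metric.sphere (0 : EuclideanSpace ℝ (Fin d)) 1)
    (V : Finset (EuclideanSpace ℝ (Fin d))) (hV : ∀ v ∈ V, ‖v‖ = 1)
    (hVne : V.Nonempty)
    (N : ℕ) (𝒜 : Fin N → Set (EuclideanSpace ℝ (Fin d)))
    (h𝒜m : ∀ i, MeasurableSet (𝒜 i))
    (h𝒜disj : Pairwise (Function.onFun Disjoint 𝒜))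
    (h𝒜union : (⋃ i, 𝒜 i) = A)
    (h𝒜diam : ∀ i, Metric.diam (𝒜 i) <
      sInf {r : ℝ | ∃ v ∈ V, ∃ w ∈ V, v ≠ w ∧ r = dist v w})
    (π : Measure (EuclideanSpace ℝ (Fin d))) [IsProbabilityMeasure π]
    (T : Ω → (EuclideanSpace ℝ (Fin d) ≃ₗᵢ[ℝ] EuclideanSpace ℝ (Fin d)))
    (hTmeas : ∀ v : EuclideanSpace ℝ (Fin d), Measurable fun ω => T ω v)
    (hTlaw : ∀ v : EuclideanSpace ℝ (Fin d), ‖v‖ = 1 →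
      Measure.map (fun ω => T ω v) P = π) :
    variance (fun ω => (V.card : ℝ)⁻¹ *
        ∑ v ∈ V, A.indicator (fun _ => (1 : ℝ)) (T ω v)) P
      ≤ (π A).toReal - (π A).toReal ^ 2
        + ((N : ℝ) / (V.card : ℝ) - 1) * (π A).toReal :=
  variance_spherical_estimator_le_general P A hAm hAs V hV hVne N 𝒜 h𝒜union h𝒜diam π T hTmeas hTlaw
end

section
/- Let V ⊂ S^{d-1} be a centrally symmetric finite set (v ∈ V implies −v ∈ V) decomposed as V = V⁺ ⊔ (−V⁺), and let A be a centrally antisymmetric region (A ∩ (−A) = ∅). Let T be Haar-uniform on O(d), and let {r_v}_{v∈V} be i.i.d. chi(d) random variables independent of T. Define p̂^V = (1/|V|) Σ_{v∈V} 1_A(r_v · Tv) and p̂^V_AT = (1/|V|) Σ_{v∈V⁺} [1_A(r_v · Tv) + 1_A(−r_v · Tv)]. Then Var(p̂^V_AT) ≤ Var(p̂^V). -/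
/-!
Write `F a u := 1_A(r_a · T u)` (`radialHit`). As `T (-v) = -T v`, the two estimators are, up to
the factor `|V|⁻¹`, the sums over `V⁺` of `X_v = F v v + F v (-v)` and `Y_v = F v v + F (-v) (-v)`:
they differ only in which radius is attached to the direction `-v`. Any two distinct radii have the
same joint law together with `T`, so `X` and `Y` have the same means and the same mixed moments
`E[X_v X_w]`, except for the diagonal term `E[F v v · F v (-v)]`, which vanishes because
`A ∩ (-A) = ∅`, whereas its counterpart `E[F v v · F (-v) (-v)]` is nonnegative. Hence
`cov(X_v, X_w) ≤ cov(Y_v, Y_w)` for all `v, w`, and summing the covariances compares the variances.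
-/

open MeasureTheory ProbabilityTheory Pointwise
open scoped ENNReal

section IdentDistrib

variable {Ω ι β F : Type*} [MeasurableSpace Ω] [MeasurableSpace β] [MeasurableSpace F]
  {P : Measure Ω} [IsFiniteMeasure P] {R : ι → Ω → β} {S : Ω → F}

lemma identDistrib_prodMk_of_indepFun_pi (hR : ∀ i j, IdentDistrib (R i) (R j) P P)
    (hRS : IndepFun (fun ω i => R i ω) S P) (hS : AEMeasurable S P) (i j : ι) :
    IdentDistrib (fun ω => (R i ω, S ω)) (fun ω => (R j ω, S ω)) P P :=
  (hR i j).prodMk (.refl hS) (hRS.comp (measurable_pi_apply i) measurable_id)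
    (hRS.comp (measurable_pi_apply j) measurable_id)

lemma identDistrib_pair_prodMk_of_iIndepFun (hR : ∀ i j, IdentDistrib (R i) (R j) P P)
    (hRi : iIndepFun R P) (hRS : IndepFun (fun ω i => R i ω) S P) (hS : AEMeasurable S P)
    {i j i' j' : ι} (hij : i ≠ j) (hij' : i' ≠ j') :
    IdentDistrib (fun ω => ((R i ω, R j ω), S ω)) (fun ω => ((R i' ω, R j' ω), S ω)) P P :=
  ((hR i i').prodMk (hR j j') (hRi.indepFun hij) (hRi.indepFun hij')).prodMk (.refl hS)
    (hRS.comp ((measurable_pi_apply i).prodMk (measurable_pi_apply j)) measurable_id)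
    (hRS.comp ((measurable_pi_apply i').prodMk (measurable_pi_apply j')) measurable_id)

end IdentDistrib

lemma variance_sum_le_of_covariance_le {Ω ι : Type*} [MeasurableSpace Ω] {P : Measure Ω}
    [IsFiniteMeasure P] {s : Finset ι} {X Y : ι → Ω → ℝ} (hX : ∀ i ∈ s, MemLp (X i) 2 P)
    (hY : ∀ i ∈ s, MemLp (Y i) 2 P)
    (hXY : ∀ i ∈ s, ∀ j ∈ s, cov[X i, X j; P] ≤ cov[Y i, Y j; P]) :
    Var[fun ω => ∑ i ∈ s, X i ω; P] ≤ Var[fun ω => ∑ i ∈ s, Y i ω; P] := by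
  rw [variance_fun_sum' hX, variance_fun_sum' hY]
  exact Finset.sum_le_sum fun i hi => Finset.sum_le_sum fun j hj => hXY i hi j hj

lemma Set.Finite.sum_toFinset_union_neg {G M : Type*} [InvolutiveNeg G] [AddCommMonoid M]
    {s : Set G} (hs' : (s ∪ -s).Finite) (hs : s.Finite) (hdisj : Disjoint s (-s)) (f : G → M) :
    ∑ x ∈ hs'.toFinset, f x = ∑ x ∈ hs.toFinset, (f x + f (-x)) := by
  classical
  have hunion : hs'.toFinset = hs.toFinset ∪ hs.toFinset.image Neg.neg := by
    ext x
    simp [Set.mem_neg, neg_eq_iff_eq_neg]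
  have hdisj' : Disjoint hs.toFinset (hs.toFinset.image Neg.neg) := by
    simpa [← Finset.disjoint_coe] using hdisj
  rw [hunion, Finset.sum_union hdisj', Finset.sum_image neg_injective.injOn,
    Finset.sum_add_distrib]

lemma Set.ne_neg_of_disjoint_neg {G : Type*} [InvolutiveNeg G] {s : Set G}
    (h : Disjoint s (-s)) {v w : G} (hv : v ∈ s) (hw : w ∈ s) : v ≠ -w := by
  rintro rfl
  exact Set.disjoint_left.mp h hv (Set.neg_mem_neg.mpr hw)

section RadialHit

variable {Ω E : Type*} [NormedAddCommGroup E] [NormedSpace ℝ E]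

noncomputable def radialHit (A : Set E) (r : E → Ω → ℝ) (T : Ω → E ≃ₗᵢ[ℝ] E) (a u : E)
    (ω : Ω) : ℝ :=
  A.indicator (fun _ => 1) (r a ω • T ω u)

variable {A : Set E} {r : E → Ω → ℝ} {T : Ω → E ≃ₗᵢ[ℝ] E}

lemma radialHit_neg_right (a u : E) (ω : Ω) :
    radialHit A r T a (-u) ω = A.indicator (fun _ => 1) (-(r a ω • T ω u)) := by
  rw [radialHit, map_neg, smul_neg]

lemma radialHit_nonneg (a u : E) (ω : Ω) : 0 ≤ radialHit A r T a u ω :=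
  Set.indicator_nonneg (fun _ _ => zero_le_one) _

lemma radialHit_mul_self (a u : E) (ω : Ω) :
    radialHit A r T a u ω * radialHit A r T a u ω = radialHit A r T a u ω := by
  unfold radialHit
  by_cases h : r a ω • T ω u ∈ A <;> simp [h]

lemma radialHit_mul_radialHit_neg_right (hA : A ∩ -A = ∅) (a u : E) (ω : Ω) :
    radialHit A r T a u ω * radialHit A r T a (-u) ω = 0 := by
  rw [radialHit_neg_right, radialHit]
  by_cases h : r a ω • T ω u ∈ A
  · have : -(r a ω • T ω u) ∉ A := fun h' =>
      (Set.eq_empty_iff_forall_notMem.mp hA) _ ⟨h, Set.mem_neg.mpr (by simpa using h')⟩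
    simp [this]
  · simp [h]

variable [MeasurableSpace Ω] [MeasurableSpace E] [MeasurableSMul₂ ℝ E] {P : Measure Ω}
  [IsFiniteMeasure P]

lemma memLp_radialHit (hA : MeasurableSet A) (hr : ∀ a, Measurable (r a))
    (hT : ∀ u, Measurable fun ω => T ω u) (p : ℝ≥0∞) (a u : E) :
    MemLp (radialHit A r T a u) p P :=
  .of_bound ((measurable_const.indicator hA).comp ((hr a).smul (hT u))).aestronglyMeasurable 1 <|
    .of_forall fun _ => (norm_indicator_le_norm_self _ _).trans_eq norm_one

variable {V : Set E}

lemma integral_radialHit_eq (hA : MeasurableSet A) (hT : ∀ u, Measurable fun ω => T ω u)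
    (hrid : ∀ a b, IdentDistrib (r a) (r b) P P)
    (hrT : IndepFun (fun ω (v : V) => r v ω) (fun ω (v : V) => T ω v) P)
    {a a' u : E} (ha : a ∈ V) (ha' : a' ∈ V) (hu : u ∈ V) :
    ∫ ω, radialHit A r T a u ω ∂P = ∫ ω, radialHit A r T a' u ω ∂P :=
  ((identDistrib_prodMk_of_indepFun_pi (R := fun v : V => r v) (fun _ _ => hrid _ _) hrT
      (measurable_pi_lambda (fun ω (v : V) => T ω v) fun v => hT v).aemeasurable
      ⟨a, ha⟩ ⟨a', ha'⟩).comp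
    (u := fun p : ℝ × (V → E) => A.indicator (fun _ => (1 : ℝ)) (p.1 • p.2 ⟨u, hu⟩))
    ((measurable_const.indicator hA).comp
      (measurable_fst.smul ((measurable_pi_apply _).comp measurable_snd)))).integral_eq

lemma integral_radialHit_mul_eq (hA : MeasurableSet A) (hT : ∀ u, Measurable fun ω => T ω u)
    (hrid : ∀ a b, IdentDistrib (r a) (r b) P P) (hri : iIndepFun (fun v : V => r v) P)
    (hrT : IndepFun (fun ω (v : V) => r v ω) (fun ω (v : V) => T ω v) P)
    {a b a' b' u w : E} (ha : a ∈ V) (hb : b ∈ V) (ha' : a' ∈ V) (hb' : b' ∈ V)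
    (hu : u ∈ V) (hw : w ∈ V) (hab : a ≠ b) (hab' : a' ≠ b') :
    ∫ ω, radialHit A r T a u ω * radialHit A r T b w ω ∂P
      = ∫ ω, radialHit A r T a' u ω * radialHit A r T b' w ω ∂P := by
  have hind : Measurable fun x : E => A.indicator (fun _ => (1 : ℝ)) x :=
    measurable_const.indicator hA
  exact ((identDistrib_pair_prodMk_of_iIndepFun (R := fun v : V => r v) (fun _ _ => hrid _ _)
      hri hrT (measurable_pi_lambda (fun ω (v : V) => T ω v) fun v => hT v).aemeasurable
      (i := ⟨a, ha⟩) (j := ⟨b, hb⟩) (i' := ⟨a', ha'⟩) (j' := ⟨b', hb'⟩)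
      (by simpa using hab) (by simpa using hab')).comp
    (u := fun p : (ℝ × ℝ) × (V → E) => A.indicator (fun _ => (1 : ℝ)) (p.1.1 • p.2 ⟨u, hu⟩)
      * A.indicator (fun _ => (1 : ℝ)) (p.1.2 • p.2 ⟨w, hw⟩))
    ((hind.comp (measurable_fst.fst.smul ((measurable_pi_apply _).comp measurable_snd))).mul
      (hind.comp (measurable_fst.snd.smul ((measurable_pi_apply _).comp measurable_snd)))))
    |>.integral_eq

lemma integral_mul_antithetic_le (hA : MeasurableSet A) (hanti : A ∩ -A = ∅)
    (hr : ∀ a, Measurable (r a)) (hT : ∀ u, Measurable fun ω => T ω u)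
    (hrid : ∀ a b, IdentDistrib (r a) (r b) P P) (hri : iIndepFun (fun v : V => r v) P)
    (hrT : IndepFun (fun ω (v : V) => r v ω) (fun ω (v : V) => T ω v) P)
    {v w : E} (hv : v ∈ V) (hnv : -v ∈ V) (hw : w ∈ V) (hnw : -w ∈ V) (hvw : v ≠ -w) :
    ∫ ω, (radialHit A r T v v ω + radialHit A r T v (-v) ω)
        * (radialHit A r T w w ω + radialHit A r T w (-w) ω) ∂P
      ≤ ∫ ω, (radialHit A r T v v ω + radialHit A r T (-v) (-v) ω)
        * (radialHit A r T w w ω + radialHit A r T (-w) (-w) ω) ∂P := by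
  set F := radialHit A r T
  have hint : ∀ a u b u', Integrable (fun ω => F a u ω * F b u' ω) P := fun a u b u' =>
    (memLp_radialHit hA hr hT 2 a u).integrable_mul (memLp_radialHit hA hr hT 2 b u')
  -- a shared radius never hits both `x` and `-x`; independent radii may
  have hcross : ∀ x y, x ∈ V → y ∈ V → -y ∈ V → x ≠ -y →
      ∫ ω, F x x ω * F y (-y) ω ∂P ≤ ∫ ω, F x x ω * F (-y) (-y) ω ∂P := by
    intro x y hx hy hny hxy
    rcases eq_or_ne x y with rfl | hxy'
    · simp_rw [F, radialHit_mul_radialHit_neg_right hanti, integral_zero]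
      exact integral_nonneg fun _ => mul_nonneg (radialHit_nonneg ..) (radialHit_nonneg ..)
    · exact (integral_radialHit_mul_eq hA hT hrid hri hrT hx hy hx hny hx hny hxy' hxy).le
  have hneg : ∫ ω, F v (-v) ω * F w (-w) ω ∂P = ∫ ω, F (-v) (-v) ω * F (-w) (-w) ω ∂P := by
    rcases eq_or_ne v w with rfl | hvw'
    · simp_rw [F, radialHit_mul_self]
      exact integral_radialHit_eq hA hT hrid hrT hv hnv hnv
    · exact integral_radialHit_mul_eq hA hT hrid hri hrT hv hw hnv hnw hnv hnw hvw'
        (neg_injective.ne hvw')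
  have hexpand : ∀ a b c d : ℝ, (a + b) * (c + d) = a * c + a * d + (c * b + b * d) := by
    intros; ring
  simp_rw [hexpand]
  rw [integral_add, integral_add, integral_add, integral_add, integral_add, integral_add]
  · linarith [hcross v w hv hw hnw hvw, hcross w v hw hv hnv fun h => hvw (by rw [h, neg_neg])]
  all_goals first | exact hint .. | exact (hint ..).add (hint ..)

lemma covariance_antithetic_le [IsProbabilityMeasure P] (hA : MeasurableSet A)
    (hanti : A ∩ -A = ∅)
    (hr : ∀ a, Measurable (r a)) (hT : ∀ u, Measurable fun ω => T ω u)
    (hrid : ∀ a b, IdentDistrib (r a) (r b) P P) (hri : iIndepFun (fun v : V => r v) P)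
    (hrT : IndepFun (fun ω (v : V) => r v ω) (fun ω (v : V) => T ω v) P)
    {v w : E} (hv : v ∈ V) (hnv : -v ∈ V) (hw : w ∈ V) (hnw : -w ∈ V) (hvw : v ≠ -w) :
    cov[fun ω => radialHit A r T v v ω + radialHit A r T v (-v) ω,
        fun ω => radialHit A r T w w ω + radialHit A r T w (-w) ω; P]
      ≤ cov[fun ω => radialHit A r T v v ω + radialHit A r T (-v) (-v) ω,
        fun ω => radialHit A r T w w ω + radialHit A r T (-w) (-w) ω; P] := by
  have hL2 : ∀ a u b u', MemLp (fun ω => radialHit A r T a u ω + radialHit A r T b u' ω) 2 P :=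
    fun a u b u' => (memLp_radialHit hA hr hT 2 a u).add (memLp_radialHit hA hr hT 2 b u')
  have hmean : ∀ x, x ∈ V → -x ∈ V →
      ∫ ω, radialHit A r T x x ω + radialHit A r T x (-x) ω ∂P
        = ∫ ω, radialHit A r T x x ω + radialHit A r T (-x) (-x) ω ∂P := by
    intro x hx hnx
    have hint : ∀ a u, Integrable (radialHit A r T a u) P := fun a u =>
      memLp_one_iff_integrable.mp (memLp_radialHit hA hr hT 1 a u)
    rw [integral_add (hint ..) (hint ..), integral_add (hint ..) (hint ..),
      integral_radialHit_eq hA hT hrid hrT hx hnx hnx]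
  rw [covariance_eq_sub (hL2 ..) (hL2 ..), covariance_eq_sub (hL2 ..) (hL2 ..),
    hmean v hv hnv, hmean w hw hnw]
  exact sub_le_sub_right
    (integral_mul_antithetic_le hA hanti hr hT hrid hri hrT hv hnv hw hnw hvw) _

end RadialHit

theorem variance_antithetic_le_general {d : ℕ} {Ω : Type*} [MeasurableSpace Ω]
    (P : Measure Ω) [IsProbabilityMeasure P]
    (V Vp : Set (EuclideanSpace ℝ (Fin d)))
    (hVfin : V.Finite) (hVpfin : Vp.Finite)
    (hVdecomp : V = Vp ∪ (-Vp)) (hVpdisj : Disjoint Vp (-Vp))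
    (A : Set (EuclideanSpace ℝ (Fin d))) (hAm : MeasurableSet A)
    (hanti : A ∩ (-A) = ∅)
    (T : Ω → (EuclideanSpace ℝ (Fin d) ≃ₗᵢ[ℝ] EuclideanSpace ℝ (Fin d)))
    (hTmeas : ∀ v : EuclideanSpace ℝ (Fin d), Measurable fun ω => T ω v)
    (r : EuclideanSpace ℝ (Fin d) → Ω → ℝ)
    (hrmeas : ∀ v, Measurable (r v))
    (hrid : ∀ v w, IdentDistrib (r v) (r w) P P)
    (hriid : iIndepFun (fun v : V => r v) P)
    (hindepT : IndepFun (fun ω => fun v : V => r v ω)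
      (fun ω => fun v : V => T ω v) P) :
    variance (fun ω => (Nat.card V : ℝ)⁻¹ *
        ∑ v ∈ hVpfin.toFinset,
          (A.indicator (fun _ => (1 : ℝ)) (r v ω • T ω v)
            + A.indicator (fun _ => (1 : ℝ)) (-(r v ω • T ω v)))) P
      ≤ variance (fun ω => (Nat.card V : ℝ)⁻¹ *
        ∑ v ∈ hVfin.toFinset,
          A.indicator (fun _ => (1 : ℝ)) (r v ω • T ω v)) P := by
  subst hVdecomp
  have hmem : ∀ v ∈ Vp, v ∈ Vp ∪ -Vp ∧ -v ∈ Vp ∪ -Vp := fun v hv =>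
    ⟨.inl hv, .inr (by simpa using hv)⟩
  have hL2 : ∀ a u b u', MemLp (fun ω => radialHit A r T a u ω + radialHit A r T b u' ω) 2 P :=
    fun a u b u' => (memLp_radialHit hAm hrmeas hTmeas 2 a u).add
      (memLp_radialHit hAm hrmeas hTmeas 2 b u')
  simp_rw [← radialHit_neg_right, hVfin.sum_toFinset_union_neg hVpfin hVpdisj
    (fun v => A.indicator (fun _ => (1 : ℝ)) (r v _ • T _ v)), variance_const_mul]
  gcongr
  refine variance_sum_le_of_covariance_le (fun _ _ => hL2 ..) (fun _ _ => hL2 ..)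
    fun v hv w hw => ?_
  rw [Set.Finite.mem_toFinset] at hv hw
  exact covariance_antithetic_le hAm hanti hrmeas hTmeas hrid hriid hindepT (hmem v hv).1
    (hmem v hv).2 (hmem w hw).1 (hmem w hw).2 (Set.ne_neg_of_disjoint_neg hVpdisj hv hw)

/-- Let `V ⊆ S^{d-1}` be a finite centrally symmetric set,
decomposed as `V = V⁺ ⊔ (−V⁺)`, and let `A` be centrally antisymmetric
(`A ∩ (−A) = ∅`). Let `T` be a random rotation whose action on each unit
vector is uniform on the sphere (law `π`), and let `(r_v)` be i.i.d.
nonnegative radii independent of `T`. Then the antithetic spherical estimator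
`p̂^V_AT = |V|⁻¹ ∑_{v∈V⁺} [1_A(r_v·Tv) + 1_A(−r_v·Tv)]` has variance at most
that of `p̂^V = |V|⁻¹ ∑_{v∈V} 1_A(r_v·Tv)`. -/
theorem variance_antithetic_le {d : ℕ} {Ω : Type*} [MeasurableSpace Ω]
    (P : Measure Ω) [IsProbabilityMeasure P]
    (V Vp : Set (EuclideanSpace ℝ (Fin d)))
    (hVfin : V.Finite) (hVpfin : Vp.Finite)
    (hVs : ∀ v ∈ V, ‖v‖ = 1)
    (hsym : ∀ v ∈ V, -v ∈ V)
    (hVdecomp : V = Vp ∪ (-Vp)) (hVpdisj : Disjoint Vp (-Vp))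
    (A : Set (EuclideanSpace ℝ (Fin d))) (hAm : MeasurableSet A)
    (hanti : A ∩ (-A) = ∅)
    (T : Ω → (EuclideanSpace ℝ (Fin d) ≃ₗᵢ[ℝ] EuclideanSpace ℝ (Fin d)))
    (hTmeas : ∀ v : EuclideanSpace ℝ (Fin d), Measurable fun ω => T ω v)
    (π : Measure (EuclideanSpace ℝ (Fin d))) [IsProbabilityMeasure π]
    (hTlaw : ∀ v : EuclideanSpace ℝ (Fin d), ‖v‖ = 1 →
      Measure.map (fun ω => T ω v) P = π)
    (r : EuclideanSpace ℝ (Fin d) → Ω → ℝ)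
    (hrmeas : ∀ v, Measurable (r v))
    (hrpos : ∀ v ω, 0 ≤ r v ω)
    (hrid : ∀ v w, IdentDistrib (r v) (r w) P P)
    (hriid : iIndepFun (fun v : V => r v) P)
    (hindepT : IndepFun (fun ω => fun v : V => r v ω)
      (fun ω => fun v : V => T ω v) P) :
    variance (fun ω => (Nat.card V : ℝ)⁻¹ *
        ∑ v ∈ hVpfin.toFinset,
          (A.indicator (fun _ => (1 : ℝ)) (r v ω • T ω v)
            + A.indicator (fun _ => (1 : ℝ)) (-(r v ω • T ω v)))) P
      ≤ variance (fun ω => (Nat.card V : ℝ)⁻¹ *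
        ∑ v ∈ hVfin.toFinset,
          A.indicator (fun _ => (1 : ℝ)) (r v ω • T ω v)) P :=
  variance_antithetic_le_general P V Vp hVfin hVpfin hVdecomp hVpdisj A hAm hanti T hTmeas r hrmeas
    hrid hriid hindepT
end
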